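/- arXiv:1703.03229 — 2 statements merged into one kernel-verified Lean document; each statement's English description precedes it below -/
import Mathlib

section
/- Let H be a cocommutative Hopf quasigroup over a field k. Then the antipode λ: H → H^op is an anchor morphism for the right H-comodule magma (H^op, ρ(x) = x_(1) ⊗ λ(x_(2))): it is a morphism of unital magmas H → H^op, a morphism of right H-comodules, and satisfies (b ·^op λ(x_(1))) ·^op λ(λ(x_(2))) = ε(x) b and (b ·^op λ(λ(x_(1)))) ·^op λ(x_(2)) = ε(x) b for all b, x ∈ H, where ·^op denotes the opposite product b ·^op c = c · b. -/
open TensorProduct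

noncomputable section

namespace DoiHopf

variable (k : Type) [Field k]
variable (H : Type) [AddCommGroup H] [Module k H]

/-- A Hopf quasigroup structure on `H`: a unital (not necessarily associative) magma and a
coassociative counital comonoid such that `eps` and `delta` are morphisms of unital magmas,
with an antipode `lam` satisfying the four Hopf quasigroup antipode identities. -/
structure IsHopfQuasigroup (mul : H ⊗[k] H →ₗ[k] H) (one : H)
    (eps : H →ₗ[k] k) (delta : H →ₗ[k] H ⊗[k] H) (lam : H →ₗ[k] H) : Prop where
  one_mul : ∀ x, mul (one ⊗ₜ[k] x) = x
  mul_one : ∀ x, mul (x ⊗ₜ[k] one) = x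
  coassoc : (TensorProduct.assoc k H H H).toLinearMap ∘ₗ delta.rTensor H ∘ₗ delta
      = delta.lTensor H ∘ₗ delta
  counit_left : ∀ x, (TensorProduct.lid k H) ((eps.rTensor H) (delta x)) = x
  counit_right : ∀ x, (TensorProduct.rid k H) ((eps.lTensor H) (delta x)) = x
  eps_mul : ∀ x y, eps (mul (x ⊗ₜ[k] y)) = eps x * eps y
  eps_one : eps one = 1
  delta_mul : delta ∘ₗ mul = (TensorProduct.map mul mul)
      ∘ₗ (TensorProduct.tensorTensorTensorComm k H H H H).toLinearMap
      ∘ₗ (TensorProduct.map delta delta)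
  delta_one : delta one = one ⊗ₜ[k] one
  antipode_left₁ : mul ∘ₗ (TensorProduct.map lam mul)
      ∘ₗ (TensorProduct.assoc k H H H).toLinearMap ∘ₗ delta.rTensor H
      = (TensorProduct.lid k H).toLinearMap ∘ₗ eps.rTensor H
  antipode_left₂ : mul ∘ₗ (TensorProduct.map (LinearMap.id : H →ₗ[k] H) (mul ∘ₗ lam.rTensor H))
      ∘ₗ (TensorProduct.assoc k H H H).toLinearMap ∘ₗ delta.rTensor H
      = (TensorProduct.lid k H).toLinearMap ∘ₗ eps.rTensor H
  antipode_right₁ : mul ∘ₗ (TensorProduct.map mul lam)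
      ∘ₗ (TensorProduct.assoc k H H H).symm.toLinearMap ∘ₗ delta.lTensor H
      = (TensorProduct.rid k H).toLinearMap ∘ₗ eps.lTensor H
  antipode_right₂ : mul ∘ₗ (TensorProduct.map (mul ∘ₗ lam.lTensor H) (LinearMap.id : H →ₗ[k] H))
      ∘ₗ (TensorProduct.assoc k H H H).symm.toLinearMap ∘ₗ delta.lTensor H
      = (TensorProduct.rid k H).toLinearMap ∘ₗ eps.lTensor H

/-- A right `H`-comodule magma structure on `B`: a unital magma which is a right `H`-comodule
whose coaction is multiplicative for the tensor product magma structure on `B ⊗ H` and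
sends the unit to `1_B ⊗ 1_H`. -/
structure IsComoduleMagma (mul : H ⊗[k] H →ₗ[k] H) (one : H)
    (eps : H →ₗ[k] k) (delta : H →ₗ[k] H ⊗[k] H)
    {B : Type} [AddCommGroup B] [Module k B]
    (mulB : B ⊗[k] B →ₗ[k] B) (oneB : B) (rho : B →ₗ[k] B ⊗[k] H) : Prop where
  oneB_mul : ∀ b, mulB (oneB ⊗ₜ[k] b) = b
  mul_oneB : ∀ b, mulB (b ⊗ₜ[k] oneB) = b
  counit : ∀ b, (TensorProduct.rid k B) ((eps.lTensor B) (rho b)) = b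
  coassoc : rho.rTensor H ∘ₗ rho
      = (TensorProduct.assoc k B H H).symm.toLinearMap ∘ₗ delta.lTensor B ∘ₗ rho
  mul_compat : rho ∘ₗ mulB = (TensorProduct.map mulB mul)
      ∘ₗ (TensorProduct.tensorTensorTensorComm k B H B H).toLinearMap
      ∘ₗ (TensorProduct.map rho rho)
  one_compat : rho oneB = oneB ⊗ₜ[k] one

/-- The generic "action against `f : H → B'` after the coaction" endomorphism; for
`f = h ∘ λ` this is the canonical idempotent `q` of the paper. -/
def act {M B' : Type} [AddCommGroup M] [Module k M] [AddCommGroup B'] [Module k B']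
    (phi : M ⊗[k] B' →ₗ[k] M) (rho : M →ₗ[k] M ⊗[k] H) (f : H →ₗ[k] B') : M →ₗ[k] M :=
  phi ∘ₗ f.lTensor M ∘ₗ rho

/-- An anchor morphism `h : H → B`: a multiplicative total integral (a morphism of unital
magmas and of right `H`-comodules) satisfying the two cancellation conditions (c1), (c2). -/
structure IsAnchor (mul : H ⊗[k] H →ₗ[k] H) (one : H)
    (eps : H →ₗ[k] k) (delta : H →ₗ[k] H ⊗[k] H) (lam : H →ₗ[k] H)
    {B : Type} [AddCommGroup B] [Module k B]
    (mulB : B ⊗[k] B →ₗ[k] B) (oneB : B) (rho : B →ₗ[k] B ⊗[k] H)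
    (h : H →ₗ[k] B) : Prop where
  comod : rho ∘ₗ h = h.rTensor H ∘ₗ delta
  unit : h one = oneB
  mul_morph : mulB ∘ₗ TensorProduct.map h h = h ∘ₗ mul
  c1 : mulB ∘ₗ (TensorProduct.map (mulB ∘ₗ h.lTensor B) (h ∘ₗ lam))
      ∘ₗ (TensorProduct.assoc k B H H).symm.toLinearMap ∘ₗ delta.lTensor B
      = (TensorProduct.rid k B).toLinearMap ∘ₗ eps.lTensor B
  c2 : mulB ∘ₗ (TensorProduct.map (mulB ∘ₗ (h ∘ₗ lam).lTensor B) h)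
      ∘ₗ (TensorProduct.assoc k B H H).symm.toLinearMap ∘ₗ delta.lTensor B
      = (TensorProduct.rid k B).toLinearMap ∘ₗ eps.lTensor B

variable (mul : H ⊗[k] H →ₗ[k] H) (one : H) (eps : H →ₗ[k] k)
variable (delta : H →ₗ[k] H ⊗[k] H) (lam : H →ₗ[k] H)

section Aux

variable {k H mul one eps delta lam}

/-- canonical finite representation of a tensor -/
private noncomputable def rep (t : H ⊗[k] H) : Finset (H × H) :=
  (TensorProduct.exists_finset t).choose

private lemma rep_spec (t : H ⊗[k] H) : t = ∑ p ∈ rep t, p.1 ⊗ₜ[k] p.2 :=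
  (TensorProduct.exists_finset t).choose_spec

private lemma hD (x : H) : delta x = ∑ p ∈ rep (delta x), p.1 ⊗ₜ[k] p.2 :=
  rep_spec (delta x)

section withrepr
variable {ι : Type} {x : H} {s : Finset ι} {f g : ι → H}

private lemma AL1 (hH : IsHopfQuasigroup k H mul one eps delta lam) (hs : delta x = ∑ i ∈ s, f i ⊗ₜ[k] g i) (b : H) :
    ∑ i ∈ s, mul (lam (f i) ⊗ₜ[k] mul (g i ⊗ₜ[k] b)) = eps x • b := by
  have h := LinearMap.congr_fun hH.antipode_left₁ (x ⊗ₜ[k] b)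
  simp only [LinearMap.comp_apply, LinearMap.rTensor_tmul, LinearEquiv.coe_coe,
    lid_tmul] at h
  rw [hs] at h
  simpa [sum_tmul, map_sum] using h

private lemma AL2 (hH : IsHopfQuasigroup k H mul one eps delta lam) (hs : delta x = ∑ i ∈ s, f i ⊗ₜ[k] g i) (b : H) :
    ∑ i ∈ s, mul (f i ⊗ₜ[k] mul (lam (g i) ⊗ₜ[k] b)) = eps x • b := by
  have h := LinearMap.congr_fun hH.antipode_left₂ (x ⊗ₜ[k] b)
  simp only [LinearMap.comp_apply, LinearMap.rTensor_tmul, LinearEquiv.coe_coe,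
    lid_tmul] at h
  rw [hs] at h
  simpa [sum_tmul, map_sum] using h

private lemma AR1 (hH : IsHopfQuasigroup k H mul one eps delta lam) (hs : delta x = ∑ i ∈ s, f i ⊗ₜ[k] g i) (b : H) :
    ∑ i ∈ s, mul (mul (b ⊗ₜ[k] f i) ⊗ₜ[k] lam (g i)) = eps x • b := by
  have h := LinearMap.congr_fun hH.antipode_right₁ (b ⊗ₜ[k] x)
  simp only [LinearMap.comp_apply, LinearMap.lTensor_tmul, LinearEquiv.coe_coe,
    rid_tmul] at h
  rw [hs] at h
  simpa [tmul_sum, map_sum] using h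

private lemma AR2 (hH : IsHopfQuasigroup k H mul one eps delta lam) (hs : delta x = ∑ i ∈ s, f i ⊗ₜ[k] g i) (b : H) :
    ∑ i ∈ s, mul (mul (b ⊗ₜ[k] lam (f i)) ⊗ₜ[k] g i) = eps x • b := by
  have h := LinearMap.congr_fun hH.antipode_right₂ (b ⊗ₜ[k] x)
  simp only [LinearMap.comp_apply, LinearMap.lTensor_tmul, LinearEquiv.coe_coe,
    rid_tmul] at h
  rw [hs] at h
  simpa [tmul_sum, map_sum] using h

private lemma CL (hH : IsHopfQuasigroup k H mul one eps delta lam) (hs : delta x = ∑ i ∈ s, f i ⊗ₜ[k] g i) :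
    ∑ i ∈ s, eps (f i) • g i = x := by
  have h := hH.counit_left x
  rw [hs] at h
  simpa [map_sum] using h

private lemma CR (hH : IsHopfQuasigroup k H mul one eps delta lam) (hs : delta x = ∑ i ∈ s, f i ⊗ₜ[k] g i) :
    ∑ i ∈ s, eps (g i) • f i = x := by
  have h := hH.counit_right x
  rw [hs] at h
  simpa [map_sum] using h

private lemma EE (hH : IsHopfQuasigroup k H mul one eps delta lam) (hs : delta x = ∑ i ∈ s, f i ⊗ₜ[k] g i) :
    ∑ i ∈ s, eps (f i) * eps (g i) = eps x := by
  have h := congrArg eps (CL hH hs)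
  simpa [Finset.mul_sum, smul_eq_mul] using h

private lemma P1 (hH : IsHopfQuasigroup k H mul one eps delta lam) (hs : delta x = ∑ i ∈ s, f i ⊗ₜ[k] g i) :
    ∑ i ∈ s, mul (lam (f i) ⊗ₜ[k] g i) = eps x • one := by
  have h := AL1 hH hs one
  simpa [hH.mul_one] using h

private lemma COC (hcc : (TensorProduct.comm k H H).toLinearMap ∘ₗ delta = delta) (hs : delta x = ∑ i ∈ s, f i ⊗ₜ[k] g i) :
    delta x = ∑ i ∈ s, g i ⊗ₜ[k] f i := by
  conv_lhs => rw [← LinearMap.congr_fun hcc x]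
  rw [LinearMap.comp_apply, LinearEquiv.coe_coe, hs]
  simp [map_sum]

end withrepr

private lemma DM (hH : IsHopfQuasigroup k H mul one eps delta lam) (x y : H) :
    delta (mul (x ⊗ₜ[k] y)) = ∑ p ∈ rep (delta x), ∑ q ∈ rep (delta y),
      mul (p.1 ⊗ₜ[k] q.1) ⊗ₜ[k] mul (p.2 ⊗ₜ[k] q.2) := by
  have h := LinearMap.congr_fun hH.delta_mul (x ⊗ₜ[k] y)
  simp only [LinearMap.comp_apply, LinearEquiv.coe_coe, map_tmul] at h
  rw [hD x, hD y] at h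
  simp only [sum_tmul, tmul_sum, map_sum] at h
  rw [Finset.sum_comm] at h
  simpa using h

private lemma S1 (hH : IsHopfQuasigroup k H mul one eps delta lam) : lam one = one := by
  have h := LinearMap.congr_fun hH.antipode_left₁ (one ⊗ₜ[k] one)
  simp only [LinearMap.comp_apply, LinearMap.rTensor_tmul, LinearEquiv.coe_coe, lid_tmul,
    hH.delta_one] at h
  simpa [hH.mul_one, hH.eps_one] using h

private lemma CLpull {M : Type} [AddCommGroup M] [Module k M]
    (hH : IsHopfQuasigroup k H mul one eps delta lam) (a : H) (L : H →ₗ[k] M) :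
    ∑ p ∈ rep (delta a), eps p.1 • L p.2 = L a := by
  have : ∑ p ∈ rep (delta a), eps p.1 • L p.2 = L (∑ p ∈ rep (delta a), eps p.1 • p.2) := by
    rw [map_sum]; exact Finset.sum_congr rfl fun p _ => (map_smul L _ _).symm
  rw [this, CL hH (hD a)]

private lemma CRpull {M : Type} [AddCommGroup M] [Module k M]
    (hH : IsHopfQuasigroup k H mul one eps delta lam) (a : H) (L : H →ₗ[k] M) :
    ∑ p ∈ rep (delta a), eps p.2 • L p.1 = L a := by
  have : ∑ p ∈ rep (delta a), eps p.2 • L p.1 = L (∑ p ∈ rep (delta a), eps p.2 • p.1) := by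
    rw [map_sum]; exact Finset.sum_congr rfl fun p _ => (map_smul L _ _).symm
  rw [this, CR hH (hD a)]

private lemma mulsumL {ι : Type} (s : Finset ι) (X : ι → H) (w : H) :
    ∑ i ∈ s, mul (X i ⊗ₜ[k] w) = mul ((∑ i ∈ s, X i) ⊗ₜ[k] w) := by
  rw [sum_tmul, map_sum]

private lemma mulsumR {ι : Type} (s : Finset ι) (X : ι → H) (w : H) :
    ∑ i ∈ s, mul (w ⊗ₜ[k] X i) = mul (w ⊗ₜ[k] (∑ i ∈ s, X i)) := by
  rw [tmul_sum, map_sum]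

private lemma EXPL (a : H) :
    (delta.lTensor H) (delta a)
      = ∑ p ∈ rep (delta a), ∑ r ∈ rep (delta p.2), p.1 ⊗ₜ[k] (r.1 ⊗ₜ[k] r.2) := by
  conv_lhs => rw [hD a]
  rw [map_sum]
  refine Finset.sum_congr rfl fun p _ => ?_
  rw [LinearMap.lTensor_tmul]
  conv_lhs => rw [hD p.2]
  rw [tmul_sum]

private lemma EXPR (hH : IsHopfQuasigroup k H mul one eps delta lam) (a : H) :
    (delta.lTensor H) (delta a)
      = ∑ p ∈ rep (delta a), ∑ r ∈ rep (delta p.1), r.1 ⊗ₜ[k] (r.2 ⊗ₜ[k] p.2) := by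
  have h := LinearMap.congr_fun hH.coassoc a
  simp only [LinearMap.comp_apply, LinearEquiv.coe_coe] at h
  rw [← h]
  conv_lhs => rw [hD a]
  rw [map_sum, map_sum]
  refine Finset.sum_congr rfl fun p _ => ?_
  rw [LinearMap.rTensor_tmul]
  conv_lhs => rw [hD p.1]
  rw [sum_tmul, map_sum]
  exact Finset.sum_congr rfl fun r _ => by rw [assoc_tmul]

private lemma lemA (hH : IsHopfQuasigroup k H mul one eps delta lam) (a u v : H) :
    ∑ p ∈ rep (delta a), ∑ r ∈ rep (delta p.2),
      mul (mul (lam p.1 ⊗ₜ[k] mul (r.1 ⊗ₜ[k] u)) ⊗ₜ[k] lam (mul (r.2 ⊗ₜ[k] v)))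
      = mul (u ⊗ₜ[k] lam (mul (a ⊗ₜ[k] v))) := by
  set Θ : H ⊗[k] (H ⊗[k] H) →ₗ[k] H :=
    mul ∘ₗ (TensorProduct.map
        (mul ∘ₗ (TensorProduct.map lam (mul ∘ₗ ((TensorProduct.mk k H H).flip u))))
        (lam ∘ₗ mul ∘ₗ ((TensorProduct.mk k H H).flip v)))
      ∘ₗ (TensorProduct.assoc k H H H).symm.toLinearMap with hΘ
  have hpure : ∀ x y z : H, Θ (x ⊗ₜ[k] (y ⊗ₜ[k] z)) =
      mul (mul (lam x ⊗ₜ[k] mul (y ⊗ₜ[k] u)) ⊗ₜ[k] lam (mul (z ⊗ₜ[k] v))) := by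
    intro x y z
    simp [hΘ]
  have h1 : ∑ p ∈ rep (delta a), ∑ r ∈ rep (delta p.2),
      mul (mul (lam p.1 ⊗ₜ[k] mul (r.1 ⊗ₜ[k] u)) ⊗ₜ[k] lam (mul (r.2 ⊗ₜ[k] v)))
      = Θ ((delta.lTensor H) (delta a)) := by
    rw [EXPL a, map_sum]
    refine Finset.sum_congr rfl fun p _ => ?_
    rw [map_sum]
    exact Finset.sum_congr rfl fun r _ => (hpure _ _ _).symm
  rw [h1, EXPR hH a, map_sum]
  have h2 : ∀ p : H × H, Θ (∑ r ∈ rep (delta p.1), r.1 ⊗ₜ[k] (r.2 ⊗ₜ[k] p.2))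
      = eps p.1 • mul (u ⊗ₜ[k] lam (mul (p.2 ⊗ₜ[k] v))) := by
    intro p
    rw [map_sum]
    have h3 : ∑ r ∈ rep (delta p.1), Θ (r.1 ⊗ₜ[k] (r.2 ⊗ₜ[k] p.2))
        = ∑ r ∈ rep (delta p.1),
            mul (mul (lam r.1 ⊗ₜ[k] mul (r.2 ⊗ₜ[k] u)) ⊗ₜ[k] lam (mul (p.2 ⊗ₜ[k] v))) :=
      Finset.sum_congr rfl fun r _ => hpure _ _ _
    rw [h3, mulsumL, AL1 hH (hD p.1) u, ← smul_tmul', map_smul]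
  have h4 : ∑ p ∈ rep (delta a), Θ (∑ r ∈ rep (delta p.1), r.1 ⊗ₜ[k] (r.2 ⊗ₜ[k] p.2))
      = ∑ p ∈ rep (delta a), eps p.1 • mul (u ⊗ₜ[k] lam (mul (p.2 ⊗ₜ[k] v))) :=
    Finset.sum_congr rfl fun p _ => h2 p
  rw [h4]
  exact CLpull hH a (mul ∘ₗ (TensorProduct.mk k H H u) ∘ₗ lam ∘ₗ mul
    ∘ₗ ((TensorProduct.mk k H H).flip v))

private lemma claimD (hH : IsHopfQuasigroup k H mul one eps delta lam) (a b : H) :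
    ∑ q ∈ rep (delta b), mul (q.1 ⊗ₜ[k] lam (mul (a ⊗ₜ[k] q.2))) = eps b • lam a := by
  symm
  calc eps b • lam a
      = ∑ q ∈ rep (delta b), (eps q.1 * eps q.2) • lam a := by
        rw [← EE hH (hD b), Finset.sum_smul]
    _ = ∑ q ∈ rep (delta b), eps q.1 • (eps q.2 • lam a) := by
        simp [mul_smul]
    _ = ∑ q ∈ rep (delta b), eps q.1 •
          (∑ p ∈ rep (delta a), eps (mul (p.2 ⊗ₜ[k] q.2)) • lam p.1) := by
        refine Finset.sum_congr rfl fun q _ => ?_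
        congr 1
        have h0 : eps q.2 • lam a
            = eps q.2 • ∑ p ∈ rep (delta a), eps p.2 • lam p.1 := by
          rw [CRpull hH a lam]
        rw [h0, Finset.smul_sum]
        refine Finset.sum_congr rfl fun p _ => ?_
        rw [smul_smul, hH.eps_mul, mul_comm]
    _ = ∑ q ∈ rep (delta b), eps q.1 •
          (∑ p ∈ rep (delta a), ∑ r ∈ rep (delta p.2), ∑ t ∈ rep (delta q.2),
            mul (mul (lam p.1 ⊗ₜ[k] mul (r.1 ⊗ₜ[k] t.1)) ⊗ₜ[k] lam (mul (r.2 ⊗ₜ[k] t.2)))) := by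
        refine Finset.sum_congr rfl fun q _ => ?_
        congr 1
        refine Finset.sum_congr rfl fun p _ => ?_
        have hrep : delta (mul (p.2 ⊗ₜ[k] q.2))
            = ∑ z ∈ rep (delta p.2) ×ˢ rep (delta q.2),
                mul (z.1.1 ⊗ₜ[k] z.2.1) ⊗ₜ[k] mul (z.1.2 ⊗ₜ[k] z.2.2) := by
          rw [DM hH, Finset.sum_product]
        have h5 := AR1 hH hrep (lam p.1)
        rw [Finset.sum_product] at h5
        exact h5.symm
    _ = ∑ q ∈ rep (delta b), eps q.1 •
          (∑ t ∈ rep (delta q.2), mul (t.1 ⊗ₜ[k] lam (mul (a ⊗ₜ[k] t.2)))) := by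
        refine Finset.sum_congr rfl fun q _ => ?_
        congr 1
        calc ∑ p ∈ rep (delta a), ∑ r ∈ rep (delta p.2), ∑ t ∈ rep (delta q.2),
              mul (mul (lam p.1 ⊗ₜ[k] mul (r.1 ⊗ₜ[k] t.1)) ⊗ₜ[k] lam (mul (r.2 ⊗ₜ[k] t.2)))
            = ∑ p ∈ rep (delta a), ∑ t ∈ rep (delta q.2), ∑ r ∈ rep (delta p.2),
              mul (mul (lam p.1 ⊗ₜ[k] mul (r.1 ⊗ₜ[k] t.1)) ⊗ₜ[k] lam (mul (r.2 ⊗ₜ[k] t.2))) :=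
              Finset.sum_congr rfl fun p _ => Finset.sum_comm
          _ = ∑ t ∈ rep (delta q.2), ∑ p ∈ rep (delta a), ∑ r ∈ rep (delta p.2),
              mul (mul (lam p.1 ⊗ₜ[k] mul (r.1 ⊗ₜ[k] t.1)) ⊗ₜ[k] lam (mul (r.2 ⊗ₜ[k] t.2))) :=
              Finset.sum_comm
          _ = ∑ t ∈ rep (delta q.2), mul (t.1 ⊗ₜ[k] lam (mul (a ⊗ₜ[k] t.2))) :=
              Finset.sum_congr rfl fun t _ => lemA hH a t.1 t.2
    _ = ∑ q ∈ rep (delta b), mul (q.1 ⊗ₜ[k] lam (mul (a ⊗ₜ[k] q.2))) := by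
        have hK : ∀ y : H, (mul ∘ₗ (LinearMap.lTensor H (lam ∘ₗ mul ∘ₗ TensorProduct.mk k H H a))
            ∘ₗ delta) y = ∑ t ∈ rep (delta y), mul (t.1 ⊗ₜ[k] lam (mul (a ⊗ₜ[k] t.2))) := by
          intro y
          simp only [LinearMap.comp_apply]
          conv_lhs => rw [hD y]
          simp [map_sum]
        calc ∑ q ∈ rep (delta b), eps q.1 •
              (∑ t ∈ rep (delta q.2), mul (t.1 ⊗ₜ[k] lam (mul (a ⊗ₜ[k] t.2))))
            = ∑ q ∈ rep (delta b), eps q.1 •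
              ((mul ∘ₗ (LinearMap.lTensor H (lam ∘ₗ mul ∘ₗ TensorProduct.mk k H H a))
                ∘ₗ delta) q.2) :=
              Finset.sum_congr rfl fun q _ => by rw [hK]
          _ = (mul ∘ₗ (LinearMap.lTensor H (lam ∘ₗ mul ∘ₗ TensorProduct.mk k H H a))
                ∘ₗ delta) b := CLpull hH b _
          _ = ∑ q ∈ rep (delta b), mul (q.1 ⊗ₜ[k] lam (mul (a ⊗ₜ[k] q.2))) := hK b

private lemma antimult (hH : IsHopfQuasigroup k H mul one eps delta lam) (a b : H) :
    lam (mul (a ⊗ₜ[k] b)) = mul (lam b ⊗ₜ[k] lam a) := by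
  set G : H →ₗ[k] H := lam ∘ₗ mul ∘ₗ TensorProduct.mk k H H a with hG
  set Θ : H ⊗[k] (H ⊗[k] H) →ₗ[k] H :=
    mul ∘ₗ (TensorProduct.map lam (mul ∘ₗ (LinearMap.lTensor H G))) with hΘ
  have hpure : ∀ x y z : H, Θ (x ⊗ₜ[k] (y ⊗ₜ[k] z)) =
      mul (lam x ⊗ₜ[k] mul (y ⊗ₜ[k] lam (mul (a ⊗ₜ[k] z)))) := by
    intro x y z; simp [hΘ, hG]
  calc lam (mul (a ⊗ₜ[k] b)) = G b := by simp [hG]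
    _ = ∑ q ∈ rep (delta b), eps q.1 • G q.2 := (CLpull hH b G).symm
    _ = ∑ q ∈ rep (delta b), ∑ r ∈ rep (delta q.1),
          mul (lam r.1 ⊗ₜ[k] mul (r.2 ⊗ₜ[k] G q.2)) :=
        Finset.sum_congr rfl fun q _ => (AL1 hH (hD q.1) (G q.2)).symm
    _ = Θ ((delta.lTensor H) (delta b)) := by
        rw [EXPR hH b, map_sum]
        refine Finset.sum_congr rfl fun q _ => ?_
        rw [map_sum]
        refine Finset.sum_congr rfl fun r _ => ?_
        rw [hpure]
        simp [hG]
    _ = ∑ q ∈ rep (delta b), ∑ t ∈ rep (delta q.2),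
          mul (lam q.1 ⊗ₜ[k] mul (t.1 ⊗ₜ[k] lam (mul (a ⊗ₜ[k] t.2)))) := by
        rw [EXPL b, map_sum]
        refine Finset.sum_congr rfl fun q _ => ?_
        rw [map_sum]
        exact Finset.sum_congr rfl fun t _ => hpure _ _ _
    _ = ∑ q ∈ rep (delta b), eps q.2 • mul (lam q.1 ⊗ₜ[k] lam a) := by
        refine Finset.sum_congr rfl fun q _ => ?_
        rw [mulsumR, claimD hH a q.2, tmul_smul, map_smul]
    _ = mul (lam b ⊗ₜ[k] lam a) := by
        have h6 := CRpull hH b (mul ∘ₗ ((TensorProduct.mk k H H).flip (lam a)) ∘ₗ lam)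
        simpa using h6

private lemma SS1 (hH : IsHopfQuasigroup k H mul one eps delta lam)
    (hcc : (TensorProduct.comm k H H).toLinearMap ∘ₗ delta = delta) (x : H) :
    ∑ p ∈ rep (delta x), mul (lam p.1 ⊗ₜ[k] lam (lam p.2)) = eps x • one := by
  have hswap : delta x = ∑ p ∈ rep (delta x), p.2 ⊗ₜ[k] p.1 := COC hcc (hD x)
  have h := P1 hH hswap
  have h2 := congrArg lam h
  rw [map_sum, map_smul, S1 hH] at h2
  calc ∑ p ∈ rep (delta x), mul (lam p.1 ⊗ₜ[k] lam (lam p.2))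
      = ∑ p ∈ rep (delta x), lam (mul (lam p.2 ⊗ₜ[k] p.1)) :=
        Finset.sum_congr rfl fun p _ => (antimult hH (lam p.2) p.1).symm
    _ = eps x • one := h2

private lemma SQ (hH : IsHopfQuasigroup k H mul one eps delta lam)
    (hcc : (TensorProduct.comm k H H).toLinearMap ∘ₗ delta = delta) (z : H) :
    lam (lam z) = z := by
  set Θ : H ⊗[k] (H ⊗[k] H) →ₗ[k] H :=
    mul ∘ₗ (LinearMap.lTensor H (mul ∘ₗ (TensorProduct.map lam (lam ∘ₗ lam)))) with hΘ
  have hpure : ∀ x y w : H, Θ (x ⊗ₜ[k] (y ⊗ₜ[k] w))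
      = mul (x ⊗ₜ[k] mul (lam y ⊗ₜ[k] lam (lam w))) := by
    intro x y w; simp [hΘ]
  have evalA : Θ ((delta.lTensor H) (delta z)) = z := by
    rw [EXPL z, map_sum]
    have h1 : ∀ p : H × H, p ∈ rep (delta z) →
        Θ (∑ r ∈ rep (delta p.2), p.1 ⊗ₜ[k] (r.1 ⊗ₜ[k] r.2)) = eps p.2 • p.1 := by
      intro p _
      rw [map_sum]
      have h2 : ∑ r ∈ rep (delta p.2), Θ (p.1 ⊗ₜ[k] (r.1 ⊗ₜ[k] r.2))
          = ∑ r ∈ rep (delta p.2), mul (p.1 ⊗ₜ[k] mul (lam r.1 ⊗ₜ[k] lam (lam r.2))) :=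
        Finset.sum_congr rfl fun r _ => hpure _ _ _
      rw [h2, mulsumR, SS1 hH hcc p.2, tmul_smul, map_smul, hH.mul_one]
    rw [Finset.sum_congr rfl h1]
    exact CR hH (hD z)
  have evalB : Θ ((delta.lTensor H) (delta z)) = lam (lam z) := by
    rw [EXPR hH z, map_sum]
    have h1 : ∀ p : H × H, p ∈ rep (delta z) →
        Θ (∑ r ∈ rep (delta p.1), r.1 ⊗ₜ[k] (r.2 ⊗ₜ[k] p.2)) = eps p.1 • lam (lam p.2) := by
      intro p _
      rw [map_sum]
      have h2 : ∑ r ∈ rep (delta p.1), Θ (r.1 ⊗ₜ[k] (r.2 ⊗ₜ[k] p.2))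
          = ∑ r ∈ rep (delta p.1), mul (r.1 ⊗ₜ[k] mul (lam r.2 ⊗ₜ[k] lam (lam p.2))) :=
        Finset.sum_congr rfl fun r _ => hpure _ _ _
      rw [h2, AL2 hH (hD p.1) (lam (lam p.2))]
    rw [Finset.sum_congr rfl h1]
    exact CLpull hH z (lam ∘ₗ lam)
  rw [← evalB, evalA]

private lemma LTEXP (z : H) : (delta.lTensor H) (delta z)
    = ∑ t ∈ rep (delta z), t.1 ⊗ₜ[k] delta t.2 := by
  conv_lhs => rw [hD z]
  rw [map_sum]
  exact Finset.sum_congr rfl fun t _ => by rw [LinearMap.lTensor_tmul]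

private lemma MMEXP (z : H) : (TensorProduct.map delta delta) (delta z)
    = ∑ t ∈ rep (delta z), delta t.1 ⊗ₜ[k] delta t.2 := by
  conv_lhs => rw [hD z]
  rw [map_sum]
  exact Finset.sum_congr rfl fun t _ => by rw [map_tmul]

private lemma Z2EXP (hH : IsHopfQuasigroup k H mul one eps delta lam) (y : H) :
    (delta.rTensor H) (delta y)
      = ∑ p ∈ rep (delta y), ∑ t ∈ rep (delta p.2), (p.1 ⊗ₜ[k] t.1) ⊗ₜ[k] t.2 := by
  have hco : (TensorProduct.assoc k H H H) ((delta.rTensor H) (delta y))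
      = (delta.lTensor H) (delta y) := by
    have := LinearMap.congr_fun hH.coassoc y
    simpa [LinearMap.comp_apply] using this
  have h2 : (delta.rTensor H) (delta y)
      = (TensorProduct.assoc k H H H).symm ((delta.lTensor H) (delta y)) := by
    rw [← hco]; simp
  rw [h2, EXPL y, map_sum]
  refine Finset.sum_congr rfl fun p _ => ?_
  rw [map_sum]
  exact Finset.sum_congr rfl fun t _ => by rw [assoc_symm_tmul]

private lemma SHUF (hH : IsHopfQuasigroup k H mul one eps delta lam)
    (hcc : (TensorProduct.comm k H H).toLinearMap ∘ₗ delta = delta) (y : H) :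
    (TensorProduct.tensorTensorTensorComm k H H H H) ((TensorProduct.map delta delta) (delta y))
      = (TensorProduct.map delta delta) (delta y) := by
  have hRL : (TensorProduct.map delta delta) (delta y)
      = (delta.lTensor (H ⊗[k] H)) ((delta.rTensor H) (delta y)) := by
    rw [← LinearMap.congr_fun (LinearMap.lTensor_comp_rTensor H delta delta) (delta y)]
    rfl
  have hRHS2 : (TensorProduct.map delta delta) (delta y)
      = ∑ p ∈ rep (delta y), ∑ t ∈ rep (delta p.2), ∑ m ∈ rep (delta t.1),
          (p.1 ⊗ₜ[k] m.1) ⊗ₜ[k] (m.2 ⊗ₜ[k] t.2) := by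
    rw [hRL, Z2EXP hH y, map_sum]
    refine Finset.sum_congr rfl fun p _ => ?_
    rw [map_sum]
    have h3 : ∀ t : H × H, (delta.lTensor (H ⊗[k] H)) ((p.1 ⊗ₜ[k] t.1) ⊗ₜ[k] t.2)
        = (p.1 ⊗ₜ[k] t.1) ⊗ₜ[k] delta t.2 := fun t => by rw [LinearMap.lTensor_tmul]
    -- rewrite each term, then regroup using coassoc at p.2
    have h4 : ∑ t ∈ rep (delta p.2), (delta.lTensor (H ⊗[k] H)) ((p.1 ⊗ₜ[k] t.1) ⊗ₜ[k] t.2)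
        = (TensorProduct.map (TensorProduct.mk k H H p.1)
            (LinearMap.id : H ⊗[k] H →ₗ[k] H ⊗[k] H)) ((delta.lTensor H) (delta p.2)) := by
      rw [LTEXP p.2, map_sum]
      refine Finset.sum_congr rfl fun t _ => ?_
      rw [h3, map_tmul]
      simp
    rw [h4, EXPR hH p.2, map_sum]
    refine Finset.sum_congr rfl fun t _ => ?_
    rw [map_sum]
    refine Finset.sum_congr rfl fun m _ => ?_
    rw [map_tmul]
    simp
  conv_lhs => rw [hRHS2]
  rw [map_sum]
  conv_rhs => rw [hRHS2]
  refine Finset.sum_congr rfl fun p _ => ?_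
  rw [map_sum]
  refine Finset.sum_congr rfl fun t _ => ?_
  rw [map_sum]
  have h1 : ∑ m ∈ rep (delta t.1),
      (TensorProduct.tensorTensorTensorComm k H H H H) ((p.1 ⊗ₜ[k] m.1) ⊗ₜ[k] (m.2 ⊗ₜ[k] t.2))
      = (TensorProduct.map (TensorProduct.mk k H H p.1)
          ((TensorProduct.mk k H H).flip t.2)) (∑ m ∈ rep (delta t.1), m.2 ⊗ₜ[k] m.1) := by
    rw [map_sum]
    refine Finset.sum_congr rfl fun m _ => ?_
    rw [tensorTensorTensorComm_tmul, map_tmul]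
    simp
  have h2 : ∑ m ∈ rep (delta t.1), (p.1 ⊗ₜ[k] m.1) ⊗ₜ[k] (m.2 ⊗ₜ[k] t.2)
      = (TensorProduct.map (TensorProduct.mk k H H p.1)
          ((TensorProduct.mk k H H).flip t.2)) (delta t.1) := by
    conv_rhs => rw [hD t.1]
    rw [map_sum]
    refine Finset.sum_congr rfl fun m _ => ?_
    rw [map_tmul]
    simp
  rw [h1, h2, ← COC hcc (hD t.1)]

private lemma P1SP (hH : IsHopfQuasigroup k H mul one eps delta lam) (x : H) :
    ∑ p ∈ rep (delta x), ∑ t ∈ rep (delta p.2), mul (lam p.1 ⊗ₜ[k] t.1) ⊗ₜ[k] t.2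
      = one ⊗ₜ[k] x := by
  set Θ : H ⊗[k] (H ⊗[k] H) →ₗ[k] H ⊗[k] H :=
    ((mul ∘ₗ lam.rTensor H).rTensor H) ∘ₗ (TensorProduct.assoc k H H H).symm.toLinearMap
    with hΘ
  have hpure : ∀ a u v : H, Θ (a ⊗ₜ[k] (u ⊗ₜ[k] v)) = mul (lam a ⊗ₜ[k] u) ⊗ₜ[k] v := by
    intro a u v; simp [hΘ]
  have h1 : ∑ p ∈ rep (delta x), ∑ t ∈ rep (delta p.2),
      mul (lam p.1 ⊗ₜ[k] t.1) ⊗ₜ[k] t.2 = Θ ((delta.lTensor H) (delta x)) := by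
    rw [EXPL x, map_sum]
    refine Finset.sum_congr rfl fun p _ => ?_
    rw [map_sum]
    exact Finset.sum_congr rfl fun t _ => (hpure _ _ _).symm
  rw [h1, EXPR hH x, map_sum]
  have h2 : ∀ p : H × H, Θ (∑ r ∈ rep (delta p.1), r.1 ⊗ₜ[k] (r.2 ⊗ₜ[k] p.2))
      = eps p.1 • ((TensorProduct.mk k H H one) p.2) := by
    intro p
    rw [map_sum]
    have h3 : ∑ r ∈ rep (delta p.1), Θ (r.1 ⊗ₜ[k] (r.2 ⊗ₜ[k] p.2))
        = ∑ r ∈ rep (delta p.1), mul (lam r.1 ⊗ₜ[k] r.2) ⊗ₜ[k] p.2 :=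
      Finset.sum_congr rfl fun r _ => hpure _ _ _
    rw [h3, ← sum_tmul, P1 hH (hD p.1), ← smul_tmul']
    simp
  rw [Finset.sum_congr rfl fun p _ => h2 p]
  exact CLpull hH x (TensorProduct.mk k H H one)

private lemma F2 (hH : IsHopfQuasigroup k H mul one eps delta lam)
    (hcc : (TensorProduct.comm k H H).toLinearMap ∘ₗ delta = delta) (x : H) :
    delta (lam x) = (TensorProduct.map lam lam) (delta x) := by
  set AC : H ⊗[k] H →ₗ[k] H := mul ∘ₗ (TensorProduct.map mul lam)
    ∘ₗ (TensorProduct.assoc k H H H).symm.toLinearMap ∘ₗ delta.lTensor H with hAC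
  have hACp : ∀ w c : H, AC (w ⊗ₜ[k] c) = eps c • w := by
    intro w c
    have h := LinearMap.congr_fun hH.antipode_right₁ (w ⊗ₜ[k] c)
    simp only [LinearMap.comp_apply, LinearEquiv.coe_coe, LinearMap.lTensor_tmul,
      rid_tmul] at h
    simpa [hAC] using h
  have hACexp : ∀ w c : H, AC (w ⊗ₜ[k] c)
      = ∑ u ∈ rep (delta c), mul (mul (w ⊗ₜ[k] u.1) ⊗ₜ[k] lam u.2) := by
    intro w c
    simp only [hAC, LinearMap.comp_apply, LinearMap.lTensor_tmul]
    conv_lhs => rw [hD c]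
    rw [tmul_sum, map_sum, map_sum, map_sum]
    refine Finset.sum_congr rfl fun u _ => ?_
    rw [LinearEquiv.coe_coe, assoc_symm_tmul, map_tmul]
  set Ew : H → (H ⊗[k] H →ₗ[k] H) :=
    fun c => mul ∘ₗ (TensorProduct.map (mul ∘ₗ TensorProduct.mk k H H c) lam) with hEw
  have hEwp : ∀ c u₁ u₂ : H, Ew c (u₁ ⊗ₜ[k] u₂) = mul (mul (c ⊗ₜ[k] u₁) ⊗ₜ[k] lam u₂) := by
    intro c u₁ u₂; simp [hEw]
  set mulR : H → (H →ₗ[k] H) := fun c => mul ∘ₗ (TensorProduct.mk k H H).flip c with hmulR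
  have hmulRp : ∀ c z : H, mulR c z = mul (z ⊗ₜ[k] c) := by intro c z; simp [hmulR]
  set Φ : H ⊗[k] H →ₗ[k] H ⊗[k] H := (TensorProduct.map mul mul)
    ∘ₗ (TensorProduct.tensorTensorTensorComm k H H H H).toLinearMap
    ∘ₗ (TensorProduct.map delta ((TensorProduct.map lam lam) ∘ₗ delta)) with hΦ
  have s6 : ∀ c d : H, Φ (c ⊗ₜ[k] d)
      = ∑ v ∈ rep (delta d),
          (TensorProduct.map (mulR (lam v.1)) (mulR (lam v.2))) (delta c) := by
    intro c d
    simp only [hΦ, LinearMap.comp_apply, map_tmul, LinearEquiv.coe_coe]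
    have e1 : (delta c) ⊗ₜ[k] ((TensorProduct.map lam lam) (delta d))
        = ∑ z ∈ rep (delta c), ∑ v ∈ rep (delta d),
            (z.1 ⊗ₜ[k] z.2) ⊗ₜ[k] (lam v.1 ⊗ₜ[k] lam v.2) := by
      conv_lhs => rw [hD c, hD d]
      rw [map_sum, sum_tmul]
      refine Finset.sum_congr rfl fun z _ => ?_
      rw [tmul_sum]
      exact Finset.sum_congr rfl fun v _ => by rw [map_tmul]
    rw [e1, map_sum, map_sum]
    have e2 : ∀ z : H × H, (TensorProduct.map mul mul)
        ((TensorProduct.tensorTensorTensorComm k H H H H)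
          (∑ v ∈ rep (delta d), (z.1 ⊗ₜ[k] z.2) ⊗ₜ[k] (lam v.1 ⊗ₜ[k] lam v.2)))
        = ∑ v ∈ rep (delta d), mul (z.1 ⊗ₜ[k] lam v.1) ⊗ₜ[k] mul (z.2 ⊗ₜ[k] lam v.2) := by
      intro z
      rw [map_sum, map_sum]
      refine Finset.sum_congr rfl fun v _ => ?_
      rw [tensorTensorTensorComm_tmul, map_tmul]
    rw [Finset.sum_congr rfl fun z _ => e2 z, Finset.sum_comm]
    refine Finset.sum_congr rfl fun v _ => ?_
    conv_rhs => rw [hD c]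
    rw [map_sum]
    refine Finset.sum_congr rfl fun z _ => ?_
    rw [map_tmul, hmulRp, hmulRp]
  have s1 : delta (lam x) = ∑ p ∈ rep (delta x), eps p.2 • delta (lam p.1) := by
    have h := CRpull hH x (delta ∘ₗ lam)
    simp only [LinearMap.comp_apply] at h
    exact h.symm
  have s2 : ∀ p : H × H, eps p.2 • delta (lam p.1)
      = ∑ w ∈ rep (delta (lam p.1)), ∑ t ∈ rep (delta p.2),
          AC (w.1 ⊗ₜ[k] t.1) ⊗ₜ[k] AC (w.2 ⊗ₜ[k] t.2) := by
    intro p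
    calc eps p.2 • delta (lam p.1)
        = ∑ t ∈ rep (delta p.2), (eps t.1 * eps t.2) • delta (lam p.1) := by
          rw [← EE hH (hD p.2), Finset.sum_smul]
      _ = ∑ t ∈ rep (delta p.2), ∑ w ∈ rep (delta (lam p.1)),
            AC (w.1 ⊗ₜ[k] t.1) ⊗ₜ[k] AC (w.2 ⊗ₜ[k] t.2) := by
          refine Finset.sum_congr rfl fun t _ => ?_
          conv_lhs => rw [hD (lam p.1)]
          rw [Finset.smul_sum]
          refine Finset.sum_congr rfl fun w _ => ?_
          rw [hACp, hACp, tmul_smul, ← smul_tmul', smul_smul, mul_comm]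
      _ = ∑ w ∈ rep (delta (lam p.1)), ∑ t ∈ rep (delta p.2),
            AC (w.1 ⊗ₜ[k] t.1) ⊗ₜ[k] AC (w.2 ⊗ₜ[k] t.2) := Finset.sum_comm
  have s34 : ∀ p : H × H, ∀ w : H × H,
      ∑ t ∈ rep (delta p.2), AC (w.1 ⊗ₜ[k] t.1) ⊗ₜ[k] AC (w.2 ⊗ₜ[k] t.2)
      = ∑ t ∈ rep (delta p.2), ∑ u ∈ rep (delta t.1), ∑ v ∈ rep (delta t.2),
          mul (mul (w.1 ⊗ₜ[k] u.1) ⊗ₜ[k] lam v.1)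
            ⊗ₜ[k] mul (mul (w.2 ⊗ₜ[k] u.2) ⊗ₜ[k] lam v.2) := by
    intro p w
    have e1 : ∑ t ∈ rep (delta p.2), AC (w.1 ⊗ₜ[k] t.1) ⊗ₜ[k] AC (w.2 ⊗ₜ[k] t.2)
        = (TensorProduct.map (Ew w.1) (Ew w.2))
            ((TensorProduct.map delta delta) (delta p.2)) := by
      rw [MMEXP p.2, map_sum]
      refine Finset.sum_congr rfl fun t _ => ?_
      rw [map_tmul, hACexp, hACexp]
      congr 1
      · conv_rhs => rw [hD t.1]
        rw [map_sum]
        exact Finset.sum_congr rfl fun u _ => by rw [hEwp]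
      · conv_rhs => rw [hD t.2]
        rw [map_sum]
        exact Finset.sum_congr rfl fun v _ => by rw [hEwp]
    rw [e1, ← SHUF hH hcc p.2, MMEXP p.2, map_sum, map_sum]
    refine Finset.sum_congr rfl fun t _ => ?_
    conv_lhs => rw [hD t.1, hD t.2]
    rw [sum_tmul, map_sum, map_sum]
    refine Finset.sum_congr rfl fun u _ => ?_
    rw [tmul_sum, map_sum, map_sum]
    refine Finset.sum_congr rfl fun v _ => ?_
    rw [tensorTensorTensorComm_tmul, map_tmul, hEwp, hEwp]
  have s5 : ∀ p : H × H, ∀ t : H × H,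
      ∑ w ∈ rep (delta (lam p.1)), ∑ u ∈ rep (delta t.1), ∑ v ∈ rep (delta t.2),
        mul (mul (w.1 ⊗ₜ[k] u.1) ⊗ₜ[k] lam v.1)
          ⊗ₜ[k] mul (mul (w.2 ⊗ₜ[k] u.2) ⊗ₜ[k] lam v.2)
      = Φ (mul (lam p.1 ⊗ₜ[k] t.1) ⊗ₜ[k] t.2) := by
    intro p t
    rw [s6]
    calc ∑ w ∈ rep (delta (lam p.1)), ∑ u ∈ rep (delta t.1), ∑ v ∈ rep (delta t.2),
          mul (mul (w.1 ⊗ₜ[k] u.1) ⊗ₜ[k] lam v.1)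
            ⊗ₜ[k] mul (mul (w.2 ⊗ₜ[k] u.2) ⊗ₜ[k] lam v.2)
        = ∑ w ∈ rep (delta (lam p.1)), ∑ v ∈ rep (delta t.2), ∑ u ∈ rep (delta t.1),
          mul (mul (w.1 ⊗ₜ[k] u.1) ⊗ₜ[k] lam v.1)
            ⊗ₜ[k] mul (mul (w.2 ⊗ₜ[k] u.2) ⊗ₜ[k] lam v.2) :=
          Finset.sum_congr rfl fun w _ => Finset.sum_comm
      _ = ∑ v ∈ rep (delta t.2), ∑ w ∈ rep (delta (lam p.1)), ∑ u ∈ rep (delta t.1),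
          mul (mul (w.1 ⊗ₜ[k] u.1) ⊗ₜ[k] lam v.1)
            ⊗ₜ[k] mul (mul (w.2 ⊗ₜ[k] u.2) ⊗ₜ[k] lam v.2) := Finset.sum_comm
      _ = ∑ v ∈ rep (delta t.2),
            (TensorProduct.map (mulR (lam v.1)) (mulR (lam v.2)))
              (delta (mul (lam p.1 ⊗ₜ[k] t.1))) := by
          refine Finset.sum_congr rfl fun v _ => ?_
          rw [DM hH (lam p.1) t.1, map_sum]
          refine Finset.sum_congr rfl fun w _ => ?_
          rw [map_sum]
          refine Finset.sum_congr rfl fun u _ => ?_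
          rw [map_tmul, hmulRp, hmulRp]
  calc delta (lam x) = ∑ p ∈ rep (delta x), eps p.2 • delta (lam p.1) := s1
    _ = ∑ p ∈ rep (delta x), ∑ w ∈ rep (delta (lam p.1)), ∑ t ∈ rep (delta p.2),
          AC (w.1 ⊗ₜ[k] t.1) ⊗ₜ[k] AC (w.2 ⊗ₜ[k] t.2) :=
        Finset.sum_congr rfl fun p _ => s2 p
    _ = ∑ p ∈ rep (delta x), ∑ w ∈ rep (delta (lam p.1)), ∑ t ∈ rep (delta p.2),
          ∑ u ∈ rep (delta t.1), ∑ v ∈ rep (delta t.2),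
          mul (mul (w.1 ⊗ₜ[k] u.1) ⊗ₜ[k] lam v.1)
            ⊗ₜ[k] mul (mul (w.2 ⊗ₜ[k] u.2) ⊗ₜ[k] lam v.2) :=
        Finset.sum_congr rfl fun p _ => Finset.sum_congr rfl fun w _ => s34 p w
    _ = ∑ p ∈ rep (delta x), ∑ t ∈ rep (delta p.2), ∑ w ∈ rep (delta (lam p.1)),
          ∑ u ∈ rep (delta t.1), ∑ v ∈ rep (delta t.2),
          mul (mul (w.1 ⊗ₜ[k] u.1) ⊗ₜ[k] lam v.1)
            ⊗ₜ[k] mul (mul (w.2 ⊗ₜ[k] u.2) ⊗ₜ[k] lam v.2) :=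
        Finset.sum_congr rfl fun p _ => Finset.sum_comm
    _ = ∑ p ∈ rep (delta x), ∑ t ∈ rep (delta p.2),
          Φ (mul (lam p.1 ⊗ₜ[k] t.1) ⊗ₜ[k] t.2) :=
        Finset.sum_congr rfl fun p _ => Finset.sum_congr rfl fun t _ => s5 p t
    _ = Φ (∑ p ∈ rep (delta x), ∑ t ∈ rep (delta p.2),
          mul (lam p.1 ⊗ₜ[k] t.1) ⊗ₜ[k] t.2) := by
        rw [map_sum]
        exact Finset.sum_congr rfl fun p _ => by rw [map_sum]
    _ = Φ (one ⊗ₜ[k] x) := by rw [P1SP hH x]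
    _ = (TensorProduct.map lam lam) (delta x) := by
        simp only [hΦ, LinearMap.comp_apply, map_tmul, LinearEquiv.coe_coe]
        rw [hH.delta_one]
        have e3 : (one ⊗ₜ[k] one) ⊗ₜ[k] ((TensorProduct.map lam lam) (delta x))
            = ∑ q ∈ rep (delta x), (one ⊗ₜ[k] one) ⊗ₜ[k] (lam q.1 ⊗ₜ[k] lam q.2) := by
          conv_lhs => rw [hD x]
          rw [map_sum, tmul_sum]
          exact Finset.sum_congr rfl fun q _ => by rw [map_tmul]
        rw [e3, map_sum, map_sum]
        conv_rhs => rw [hD x]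
        rw [map_sum]
        refine Finset.sum_congr rfl fun q _ => ?_
        rw [tensorTensorTensorComm_tmul, map_tmul, map_tmul, hH.one_mul, hH.one_mul]

end Aux

/-- For a cocommutative Hopf quasigroup `H`, the antipode `λ : H → H^op` is an anchor
morphism for the right `H`-comodule magma `(H^op, x ↦ x₍₁₎ ⊗ λ(x₍₂₎))`: it is a morphism
of unital magmas and of right `H`-comodules, and satisfies the two cancellation
conditions (c1) and (c2) with respect to the opposite product. -/
theorem antipode_anchor_op
    (hH : IsHopfQuasigroup k H mul one eps delta lam)
    (hcc : (TensorProduct.comm k H H).toLinearMap ∘ₗ delta = delta) :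
    IsAnchor k H mul one eps delta lam
      (mul ∘ₗ (TensorProduct.comm k H H).toLinearMap) one
      (lam.lTensor H ∘ₗ delta) lam := by
  constructor
  · -- comod
    apply LinearMap.ext
    intro x
    simp only [LinearMap.comp_apply]
    rw [F2 hH hcc x]
    conv_lhs => rw [hD x]
    rw [map_sum, map_sum]
    conv_rhs => rw [hD x]
    rw [map_sum]
    refine Finset.sum_congr rfl fun p _ => ?_
    rw [map_tmul, LinearMap.lTensor_tmul, LinearMap.rTensor_tmul, SQ hH hcc]
  · -- unit
    exact S1 hH
  · -- mul_morph
    apply TensorProduct.ext'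
    intro x y
    simp only [LinearMap.comp_apply, map_tmul, LinearEquiv.coe_coe, comm_tmul]
    exact (antimult hH x y).symm
  · -- c1
    apply TensorProduct.ext'
    intro b x
    simp only [LinearMap.comp_apply, LinearMap.lTensor_tmul, LinearEquiv.coe_coe, rid_tmul]
    conv_lhs => rw [hD x]
    rw [tmul_sum, map_sum, map_sum, map_sum, map_sum]
    have hswap : delta x = ∑ p ∈ rep (delta x), p.2 ⊗ₜ[k] p.1 := COC hcc (hD x)
    rw [← AL2 hH hswap b]
    refine Finset.sum_congr rfl fun p _ => ?_
    simp only [LinearEquiv.coe_coe, assoc_symm_tmul, map_tmul, LinearMap.comp_apply,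
      LinearMap.lTensor_tmul, comm_tmul, SQ hH hcc]
  · -- c2
    apply TensorProduct.ext'
    intro b x
    simp only [LinearMap.comp_apply, LinearMap.lTensor_tmul, LinearEquiv.coe_coe, rid_tmul]
    conv_lhs => rw [hD x]
    rw [tmul_sum, map_sum, map_sum, map_sum, map_sum]
    have hswap : delta x = ∑ p ∈ rep (delta x), p.2 ⊗ₜ[k] p.1 := COC hcc (hD x)
    rw [← AL1 hH hswap b]
    refine Finset.sum_congr rfl fun p _ => ?_
    simp only [LinearEquiv.coe_coe, assoc_symm_tmul, map_tmul, LinearMap.comp_apply,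
      LinearMap.lTensor_tmul, comm_tmul, SQ hH hcc]


end DoiHopf
end
end

section
/- Let H be a Hopf quasigroup over a field k, A a unital magma, and φ: H ⊗ A → A a linear map with φ(1_H ⊗ a) = a and φ(x ⊗ 1_A) = ε(x) 1_A. Then h: H → A # H defined by h(x) = 1_A # x is an anchor morphism for the smash product comodule magma: it is a morphism of unital magmas, a morphism of right H-comodules, and ((m · h(x_(1))) · h(λ(x_(2)))) = ε(x) m and ((m · h(λ(x_(1)))) · h(x_(2))) = ε(x) m for all m ∈ A # H, x ∈ H. -/
open TensorProduct

noncomputable section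

namespace DoiHopf

variable (k : Type) [Field k]
variable (H : Type) [AddCommGroup H] [Module k H]

variable (mul : H ⊗[k] H →ₗ[k] H) (one : H) (eps : H →ₗ[k] k)
variable (delta : H →ₗ[k] H ⊗[k] H) (lam : H →ₗ[k] H)
variable (A : Type) [AddCommGroup A] [Module k A]
variable (mulA : A ⊗[k] A →ₗ[k] A) (oneA : A) (phi : H ⊗[k] A →ₗ[k] A)

/-- The map `ψ : H ⊗ A → A ⊗ H`, `x ⊗ a ↦ φ(x₍₁₎ ⊗ a) ⊗ x₍₂₎`. -/
def psi : H ⊗[k] A →ₗ[k] A ⊗[k] H :=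
  (TensorProduct.map phi (LinearMap.id : H →ₗ[k] H))
    ∘ₗ (TensorProduct.assoc k H A H).symm.toLinearMap
    ∘ₗ ((TensorProduct.comm k H A).toLinearMap.lTensor H)
    ∘ₗ (TensorProduct.assoc k H H A).toLinearMap
    ∘ₗ delta.rTensor A

/-- The smash product multiplication on `A ⊗ H`:
`(a ⊗ x)(b ⊗ y) = a·φ(x₍₁₎ ⊗ b) ⊗ x₍₂₎ y`. -/
def smashMul : (A ⊗[k] H) ⊗[k] (A ⊗[k] H) →ₗ[k] A ⊗[k] H :=
  (TensorProduct.map mulA mul)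
    ∘ₗ (TensorProduct.assoc k A A (H ⊗[k] H)).symm.toLinearMap
    ∘ₗ ((TensorProduct.assoc k A H H).toLinearMap.lTensor A)
    ∘ₗ (((psi k H delta A phi).rTensor H
          ∘ₗ (TensorProduct.assoc k H A H).symm.toLinearMap).lTensor A)
    ∘ₗ (TensorProduct.assoc k A H (A ⊗[k] H)).toLinearMap

/-- The coaction `id_A ⊗ δ` on the smash product `A # H`. -/
def smashRho : A ⊗[k] H →ₗ[k] (A ⊗[k] H) ⊗[k] H :=
  (TensorProduct.assoc k A H H).symm.toLinearMap ∘ₗ delta.lTensor A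

lemma psi_tmul (y : H) (b : A) :
    psi k H delta A phi (y ⊗ₜ[k] b)
      = TensorProduct.map (phi ∘ₗ (TensorProduct.mk k H A).flip b) LinearMap.id (delta y) := by
  unfold psi
  simp only [LinearMap.coe_comp, Function.comp_apply, LinearEquiv.coe_coe,
    LinearMap.rTensor_tmul]
  generalize delta y = t
  induction t using TensorProduct.induction_on with
  | zero => simp
  | tmul u v => simp
  | add s t hs ht => simp only [add_tmul, map_add, hs, ht]

lemma smashMul_tmul (a b : A) (y x : H) :
    smashMul k H mul delta A mulA phi ((a ⊗ₜ[k] y) ⊗ₜ[k] (b ⊗ₜ[k] x))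
      = TensorProduct.map
          (mulA ∘ₗ TensorProduct.mk k A A a ∘ₗ phi ∘ₗ (TensorProduct.mk k H A).flip b)
          (mul ∘ₗ (TensorProduct.mk k H H).flip x) (delta y) := by
  unfold smashMul
  simp only [LinearMap.coe_comp, Function.comp_apply, LinearEquiv.coe_coe,
    TensorProduct.assoc_tmul, LinearMap.lTensor_tmul, TensorProduct.assoc_symm_tmul,
    LinearMap.rTensor_tmul, psi_tmul k H delta A phi]
  generalize delta y = t
  induction t using TensorProduct.induction_on with
  | zero => simp
  | tmul u v => simp
  | add s t hs ht =>
      simp only [map_add, add_tmul, tmul_add, hs, ht]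

lemma smash_mul_one_right
    (hcounit : ∀ y, (TensorProduct.lid k H) ((eps.rTensor H) (delta y)) = y)
    (hA2 : ∀ a, mulA (a ⊗ₜ[k] oneA) = a)
    (hphi2 : ∀ z, phi (z ⊗ₜ[k] oneA) = eps z • oneA)
    (a : A) (y x : H) :
    smashMul k H mul delta A mulA phi ((a ⊗ₜ[k] y) ⊗ₜ[k] (oneA ⊗ₜ[k] x))
      = a ⊗ₜ[k] mul (y ⊗ₜ[k] x) := by
  rw [smashMul_tmul]
  have key : ∀ t : H ⊗[k] H,
      TensorProduct.map
          (mulA ∘ₗ TensorProduct.mk k A A a ∘ₗ phi ∘ₗ (TensorProduct.mk k H A).flip oneA)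
          (mul ∘ₗ (TensorProduct.mk k H H).flip x) t
        = a ⊗ₜ[k] mul ((TensorProduct.lid k H) ((eps.rTensor H) t) ⊗ₜ[k] x) := by
    intro t
    induction t using TensorProduct.induction_on with
    | zero => simp
    | tmul u v =>
        simp only [TensorProduct.map_tmul, LinearMap.coe_comp, Function.comp_apply,
          TensorProduct.mk_apply, LinearMap.flip_apply, hphi2, LinearMap.rTensor_tmul,
          TensorProduct.lid_tmul]
        rw [tmul_smul, LinearMap.map_smul, hA2, ← TensorProduct.smul_tmul']
        rw [show (eps u • v) ⊗ₜ[k] x = eps u • (v ⊗ₜ[k] x) from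
              (TensorProduct.smul_tmul' _ _ _).symm,
            LinearMap.map_smul, tmul_smul]
    | add s t hs ht =>
        simp only [map_add, add_tmul, tmul_add, hs, ht]
  rw [key, hcounit]

/-- For a Hopf quasigroup `H`, a unital magma `A` and `φ : H ⊗ A → A` with
`φ(1 ⊗ a) = a` and `φ(x ⊗ 1_A) = ε(x) 1_A`, the map `h : H → A # H`, `x ↦ 1_A ⊗ x`,
is an anchor morphism for the smash product comodule magma. -/
theorem smash_anchor
    (hH : IsHopfQuasigroup k H mul one eps delta lam)
    (hA1 : ∀ a, mulA (oneA ⊗ₜ[k] a) = a)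
    (hA2 : ∀ a, mulA (a ⊗ₜ[k] oneA) = a)
    (hphi1 : ∀ a, phi (one ⊗ₜ[k] a) = a)
    (hphi2 : ∀ x, phi (x ⊗ₜ[k] oneA) = eps x • oneA) :
    IsAnchor k H mul one eps delta lam
      (smashMul k H mul delta A mulA phi) (oneA ⊗ₜ[k] one) (smashRho k H delta A)
      (TensorProduct.mk k A H oneA) := by
  have hkey := smash_mul_one_right k H mul eps delta A mulA oneA phi hH.counit_left hA2 hphi2
  constructor
  · -- comod
    apply LinearMap.ext
    intro x
    simp only [LinearMap.coe_comp, Function.comp_apply, TensorProduct.mk_apply]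
    unfold smashRho
    simp only [LinearMap.coe_comp, Function.comp_apply, LinearEquiv.coe_coe,
      LinearMap.lTensor_tmul]
    generalize delta x = t
    induction t using TensorProduct.induction_on with
    | zero => simp
    | tmul u v => simp
    | add s t hs ht => simp only [tmul_add, map_add, hs, ht]
  · -- unit
    rfl
  · -- mul_morph
    apply TensorProduct.ext'
    intro x y
    simp only [LinearMap.coe_comp, Function.comp_apply, TensorProduct.map_tmul,
      TensorProduct.mk_apply]
    exact hkey oneA x y
  · -- c1
    apply TensorProduct.ext'
    intro m x
    simp only [LinearMap.coe_comp, Function.comp_apply, LinearEquiv.coe_coe,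
      LinearMap.lTensor_tmul]
    induction m using TensorProduct.induction_on with
    | zero => simp
    | tmul a y =>
        have hant := LinearMap.congr_fun hH.antipode_right₁ (y ⊗ₜ[k] x)
        simp only [LinearMap.coe_comp, Function.comp_apply, LinearEquiv.coe_coe,
          LinearMap.lTensor_tmul, TensorProduct.rid_tmul] at hant
        have key : ∀ t : H ⊗[k] H,
            smashMul k H mul delta A mulA phi
              ((TensorProduct.map
                  (smashMul k H mul delta A mulA phi ∘ₗ
                    (TensorProduct.mk k A H oneA).lTensor (A ⊗[k] H))
                  (TensorProduct.mk k A H oneA ∘ₗ lam))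
                ((TensorProduct.assoc k (A ⊗[k] H) H H).symm ((a ⊗ₜ[k] y) ⊗ₜ[k] t)))
            = a ⊗ₜ[k] mul ((TensorProduct.map mul lam)
                ((TensorProduct.assoc k H H H).symm (y ⊗ₜ[k] t))) := by
          intro t
          induction t using TensorProduct.induction_on with
          | zero => simp
          | tmul u v =>
              simp only [TensorProduct.assoc_symm_tmul, TensorProduct.map_tmul,
                LinearMap.coe_comp, Function.comp_apply, LinearMap.lTensor_tmul,
                TensorProduct.mk_apply, hkey]
          | add s t hs ht =>
              simp only [tmul_add, map_add, hs, ht]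
        rw [key, hant, TensorProduct.rid_tmul, tmul_smul]
    | add m₁ m₂ h₁ h₂ =>
        simp only [add_tmul, map_add, h₁, h₂]
  · -- c2
    apply TensorProduct.ext'
    intro m x
    simp only [LinearMap.coe_comp, Function.comp_apply, LinearEquiv.coe_coe,
      LinearMap.lTensor_tmul]
    induction m using TensorProduct.induction_on with
    | zero => simp
    | tmul a y =>
        have hant := LinearMap.congr_fun hH.antipode_right₂ (y ⊗ₜ[k] x)
        simp only [LinearMap.coe_comp, Function.comp_apply, LinearEquiv.coe_coe,
          LinearMap.lTensor_tmul, TensorProduct.rid_tmul] at hant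
        have key : ∀ t : H ⊗[k] H,
            smashMul k H mul delta A mulA phi
              ((TensorProduct.map
                  (smashMul k H mul delta A mulA phi ∘ₗ
                    (TensorProduct.mk k A H oneA ∘ₗ lam).lTensor (A ⊗[k] H))
                  (TensorProduct.mk k A H oneA))
                ((TensorProduct.assoc k (A ⊗[k] H) H H).symm ((a ⊗ₜ[k] y) ⊗ₜ[k] t)))
            = a ⊗ₜ[k] mul ((TensorProduct.map (mul ∘ₗ lam.lTensor H)
                (LinearMap.id : H →ₗ[k] H))
                ((TensorProduct.assoc k H H H).symm (y ⊗ₜ[k] t))) := by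
          intro t
          induction t using TensorProduct.induction_on with
          | zero => simp
          | tmul u v =>
              simp only [TensorProduct.assoc_symm_tmul, TensorProduct.map_tmul,
                LinearMap.coe_comp, Function.comp_apply, LinearMap.lTensor_tmul,
                TensorProduct.mk_apply, LinearMap.id_coe, id_eq, hkey]
          | add s t hs ht =>
              simp only [tmul_add, map_add, hs, ht]
        rw [key, hant, TensorProduct.rid_tmul, tmul_smul]
    | add m₁ m₂ h₁ h₂ =>
        simp only [add_tmul, map_add, h₁, h₂]
end DoiHopf
end
end
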